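/- arXiv:2208.08862 — 11 statements merged into one kernel-verified Lean document; each statement's English description precedes it below -/
import Mathlib

section
/- Let f : ℝ → ℝ be bounded. Then the following are equivalent: (P1) for all real numbers a₁, b₁, a₂, b₂, τ, if a₁ + b₁·f(t) = a₂ + b₂·f(t+τ) for all t ∈ ℝ, then a₁ = a₂ and b₁ = b₂; (P2) there is no τ ∈ ℝ such that f(t) = sup f + inf f − f(t+τ) for all t ∈ ℝ. -/
/-!
If `f (t + τ) = α + β f t`, then `f` and its translate have the same range, so the affine map
`x ↦ α + β x` maps `range f` onto itself. An increasing affine map must then fix both `sup f` and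
`inf f`, an orientation-reversing one must swap them; since a non-constant `f` has `inf f < sup f`,
the only possibilities are the identity and the reflection `x ↦ sup f + inf f - x`. The
reflection is exactly what (P2) excludes, and a constant `f` violates (P2) with `τ = 0`.
-/

namespace Real

variable {s : Set ℝ}

theorem eq_id_or_reflection_of_affine_image_eq (hne : s.Nonempty) (hba : BddAbove s)
    (hbb : BddBelow s) (hlt : sInf s < sSup s) {α β : ℝ} (h : (fun x => α + β * x) '' s = s) :
    (β = 1 ∧ α = 0) ∨ (β = -1 ∧ α = sSup s + sInf s) := by
  have hcont : Continuous fun x : ℝ => α + β * x := by fun_prop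
  rcases le_total 0 β with hβ | hβ
  · have hmono : Monotone fun x : ℝ => α + β * x := fun x y hxy => by
      simp only; gcongr
    have hSup := hmono.map_csSup_of_continuousAt hcont.continuousAt hne hba
    have hInf := hmono.map_csInf_of_continuousAt hcont.continuousAt hne hbb
    rw [h] at hSup hInf
    have hβ1 : β = 1 := by
      have : (β - 1) * (sSup s - sInf s) = 0 := by linear_combination hSup - hInf
      linarith [(mul_eq_zero.1 this).resolve_right (sub_ne_zero.2 hlt.ne')]
    subst hβ1
    left; constructor <;> linarith
  · have hanti : Antitone fun x : ℝ => α + β * x := fun x y hxy => by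
      simp only; nlinarith
    have hSup := hanti.map_csSup_of_continuousAt hcont.continuousAt hne hba
    have hInf := hanti.map_csInf_of_continuousAt hcont.continuousAt hne hbb
    rw [h] at hSup hInf
    have hβ1 : β = -1 := by
      have : (β + 1) * (sSup s - sInf s) = 0 := by linear_combination hSup - hInf
      linarith [(mul_eq_zero.1 this).resolve_right (sub_ne_zero.2 hlt.ne')]
    subst hβ1
    right; constructor <;> linarith

end Real

theorem eq_id_or_reflection_of_comp_add_eq_affine {f : ℝ → ℝ} (hba : BddAbove (Set.range f))
    (hbb : BddBelow (Set.range f)) (hlt : sInf (Set.range f) < sSup (Set.range f))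
    {τ α β : ℝ} (h : ∀ t, f (t + τ) = α + β * f t) :
    (β = 1 ∧ α = 0) ∨ (β = -1 ∧ α = sSup (Set.range f) + sInf (Set.range f)) := by
  refine Real.eq_id_or_reflection_of_affine_image_eq (Set.range_nonempty f) hba hbb hlt ?_
  calc (fun x => α + β * x) '' Set.range f = Set.range fun t => f (t + τ) := by
        rw [← Set.range_comp]; exact congrArg Set.range (funext fun t => (h t).symm)
    _ = Set.range f := (Equiv.addRight τ).surjective.range_comp f

/-- For a bounded function `f : ℝ → ℝ`, the injectivity property (P1) of the
map `(a, b) ↦ [a + b·f]` into time-translation equivalence classes is equivalent to (P2):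
there is no `τ` such that `f(t) = sup f + inf f − f(t+τ)` for all `t`. -/
theorem stmt0 (f : ℝ → ℝ) (hf : ∃ M : ℝ, ∀ t : ℝ, |f t| ≤ M) :
    (∀ a₁ b₁ a₂ b₂ τ : ℝ,
        (∀ t : ℝ, a₁ + b₁ * f t = a₂ + b₂ * f (t + τ)) → a₁ = a₂ ∧ b₁ = b₂) ↔
      ¬ ∃ τ : ℝ, ∀ t : ℝ,
          f t = sSup (Set.range f) + sInf (Set.range f) - f (t + τ) := by
  obtain ⟨M, hM⟩ := hf
  have hba : BddAbove (Set.range f) := ⟨M, by rintro _ ⟨t, rfl⟩; exact (abs_le.1 (hM t)).2⟩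
  have hbb : BddBelow (Set.range f) := ⟨-M, by rintro _ ⟨t, rfl⟩; exact (abs_le.1 (hM t)).1⟩
  constructor
  · rintro hP1 ⟨τ, hτ⟩
    have h₁ := hP1 0 1 (sSup (Set.range f) + sInf (Set.range f)) (-1) τ fun t => by
      linarith [hτ t]
    norm_num at h₁
  intro hP2 a₁ b₁ a₂ b₂ τ h
  have hlt : sInf (Set.range f) < sSup (Set.range f) := by
    by_contra! hle
    refine hP2 ⟨0, fun t => ?_⟩
    have := le_csSup hba ⟨t, rfl⟩
    have := csInf_le hbb ⟨t, rfl⟩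
    rw [add_zero]; linarith
  by_cases hb₂ : b₂ = 0
  · by_cases hb₁ : b₁ = 0
    · subst hb₁ hb₂; exact ⟨by simpa using h 0, rfl⟩
    -- a constant `f` would be a translate of itself with `β = 0`
    have hconst : ∀ t, f (t + 0) = (a₂ - a₁) / b₁ + 0 * f t := fun t => by
      subst hb₂
      rw [add_zero, zero_mul, add_zero, eq_div_iff hb₁]; linear_combination h t
    rcases eq_id_or_reflection_of_comp_add_eq_affine hba hbb hlt hconst with h₀ | h₀ <;>
      norm_num at h₀
  have hshift : ∀ t, f (t + τ) = (a₁ - a₂) / b₂ + b₁ / b₂ * f t := fun t => by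
    field_simp; linear_combination -h t
  rcases eq_id_or_reflection_of_comp_add_eq_affine hba hbb hlt hshift with ⟨hβ, hα⟩ | ⟨hβ, hα⟩
  · rw [div_eq_one_iff_eq hb₂] at hβ
    rw [div_eq_zero_iff, sub_eq_zero] at hα
    exact ⟨hα.resolve_right hb₂, hβ⟩
  · exact (hP2 ⟨τ, fun t => by rw [hshift t, hα, hβ]; ring⟩).elim
end

section
/- Let f : ℝ → ℝ be bounded. Suppose there exist real numbers a₁, b₁, a₂, b₂, τ with (a₁,b₁) ≠ (a₂,b₂) such that a₁ + b₁·f(t) = a₂ + b₂·f(t+τ) for all t ∈ ℝ. Then there exists τ' ∈ ℝ such that f(t) = sup f + inf f − f(t+τ') for all t ∈ ℝ. -/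
/-!
Rewrite the relation as `f (t + τ) = α + β * f t`. The affine map `x ↦ α + β x` then maps the
range of `f` onto itself, so it fixes its supremum `S` and infimum `I` when `β ≥ 0` and swaps
them when `β < 0`. Unless `S = I` (and `f` is constant), this forces `β = 1, α = 0`, which the
distinctness of the pairs excludes, or `β = -1, α = S + I`, which is the claim with `τ' = τ`.
-/

open Set

/-- When `b₂ = 0` the function is constant, and a constant satisfies `f (t + τ) = c + 0 * f t`. -/
lemma exists_affine_shift {f : ℝ → ℝ} {a₁ b₁ a₂ b₂ τ : ℝ} (hne : (a₁, b₁) ≠ (a₂, b₂))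
    (h : ∀ t, a₁ + b₁ * f t = a₂ + b₂ * f (t + τ)) :
    ∃ α β : ℝ, (β, α) ≠ (1, 0) ∧ ∀ t, f (t + τ) = α + β * f t := by
  rcases eq_or_ne b₂ 0 with rfl | hb₂
  · have hb₁ : b₁ ≠ 0 := by
      rintro rfl
      exact hne (by simpa using h 0)
    refine ⟨(a₂ - a₁) / b₁, 0, by simp, fun t => ?_⟩
    have := h (t + τ)
    field_simp
    linarith
  · refine ⟨(a₁ - a₂) / b₂, b₁ / b₂, ?_, fun t => ?_⟩
    · intro hαβ
      obtain ⟨hβ, hα⟩ := Prod.mk.inj hαβ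
      rw [div_eq_one_iff_eq hb₂] at hβ
      rw [div_eq_zero_iff, sub_eq_zero] at hα
      exact hne (by rw [hβ, hα.resolve_right hb₂])
    · have := h t
      field_simp
      linarith

lemma image_range_eq_of_map_add {G X : Type*} [AddGroup G] {f : G → X} {g : X → X} {τ : G}
    (h : ∀ t, f (t + τ) = g (f t)) : g '' range f = range f := by
  rw [← range_comp]
  calc range (g ∘ f) = range (f ∘ (· + τ)) := congrArg range (funext fun t => (h t).symm)
    _ = range f := (Equiv.addRight τ).surjective.range_comp f

lemma sSup_eq_sInf_or_of_affine_image_eq_self {s : Set ℝ} (hs : s.Nonempty)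
    (hab : BddAbove s) (hbb : BddBelow s) {α β : ℝ} (himage : (fun x => α + β * x) '' s = s) :
    sSup s = sInf s ∨ (β = 1 ∧ α = 0) ∨ (β = -1 ∧ α = sSup s + sInf s) := by
  have hcont : ∀ x, ContinuousAt (fun x => α + β * x) x := fun x => by fun_prop
  rcases le_or_gt 0 β with hβ | hβ
  · have hmono : Monotone (fun x => α + β * x) := fun x y hxy => by
      dsimp only; nlinarith
    have hS := hmono.map_csSup_of_continuousAt (hcont (sSup s)) hs hab
    have hI := hmono.map_csInf_of_continuousAt (hcont (sInf s)) hs hbb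
    rw [himage] at hS hI
    have : (β - 1) * (sSup s - sInf s) = 0 := by linarith
    rcases mul_eq_zero.1 this with h | h
    · obtain rfl : β = 1 := by linarith
      exact Or.inr (Or.inl ⟨rfl, by linarith⟩)
    · exact Or.inl (by linarith)
  · have hanti : Antitone (fun x => α + β * x) := fun x y hxy => by
      dsimp only; nlinarith
    have hS := hanti.map_csSup_of_continuousAt (hcont (sSup s)) hs hab
    have hI := hanti.map_csInf_of_continuousAt (hcont (sInf s)) hs hbb
    rw [himage] at hS hI
    have : (β + 1) * (sSup s - sInf s) = 0 := by linarith
    rcases mul_eq_zero.1 this with h | h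
    · obtain rfl : β = -1 := by linarith
      exact Or.inr (Or.inr ⟨rfl, by linarith⟩)
    · exact Or.inl (by linarith)

lemma exists_reflection_of_sSup_eq_sInf {f : ℝ → ℝ} (hab : BddAbove (range f))
    (hbb : BddBelow (range f)) (hSI : sSup (range f) = sInf (range f)) :
    ∃ τ' : ℝ, ∀ t : ℝ, f t = sSup (range f) + sInf (range f) - f (t + τ') := by
  have hconst : ∀ t, f t = sSup (range f) := fun t =>
    le_antisymm (le_csSup hab ⟨t, rfl⟩) (hSI ▸ csInf_le hbb ⟨t, rfl⟩)
  exact ⟨0, fun t => by rw [hconst t, hconst (t + 0), ← hSI]; ring⟩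

/-- For a bounded `f : ℝ → ℝ`, if two distinct parameter pairs `(a₁,b₁)` and
`(a₂,b₂)` satisfy `a₁ + b₁·f(t) = a₂ + b₂·f(t+τ)` for all `t`, then there is a `τ'` with
`f(t) = sup f + inf f − f(t+τ')` for all `t`. -/
theorem stmt2 (f : ℝ → ℝ) (hf : ∃ M : ℝ, ∀ t : ℝ, |f t| ≤ M)
    (a₁ b₁ a₂ b₂ τ : ℝ) (hne : (a₁, b₁) ≠ (a₂, b₂))
    (h : ∀ t : ℝ, a₁ + b₁ * f t = a₂ + b₂ * f (t + τ)) :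
    ∃ τ' : ℝ, ∀ t : ℝ,
      f t = sSup (Set.range f) + sInf (Set.range f) - f (t + τ') := by
  obtain ⟨M, hM⟩ := hf
  have hab : BddAbove (range f) := ⟨M, by rintro _ ⟨t, rfl⟩; exact (abs_le.1 (hM t)).2⟩
  have hbb : BddBelow (range f) := ⟨-M, by rintro _ ⟨t, rfl⟩; exact (abs_le.1 (hM t)).1⟩
  obtain ⟨α, β, hαβ, hshift⟩ := exists_affine_shift hne h
  rcases sSup_eq_sInf_or_of_affine_image_eq_self (range_nonempty f) hab hbb
      (image_range_eq_of_map_add hshift) with hSI | ⟨rfl, rfl⟩ | ⟨rfl, hα⟩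
  · exact exists_reflection_of_sSup_eq_sInf hab hbb hSI
  · exact absurd rfl hαβ
  · exact ⟨τ, fun t => by rw [hshift t, hα]; ring⟩
end

section
/- Let f : ℝ → ℝ be bounded and nonconstant, and suppose there exist a ∈ ℝ, b < 0 and τ ∈ ℝ such that f(t) = a + b·f(t+τ) for all t ∈ ℝ. Then b = −1 and a = sup f + inf f. -/
/-!
The affine map `g x = a + b * x` carries the range of `f` onto itself, since `f = g ∘ f(· + τ)` and
a translate of `f` has the same range. For `b < 0` the map `g` is continuous and antitone, so it
exchanges `inf f` and `sup f`: `a + b · inf f = sup f` and `a + b · sup f = inf f`. Subtracting,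
`(b + 1)(inf f - sup f) = 0`, and `inf f < sup f` because `f` is nonconstant.
-/

open Set

theorem image_range_eq_of_forall_eq_comp_add {G α : Type*} [AddGroup G] {f : G → α} {g : α → α}
    {τ : G} (h : ∀ t, f t = g (f (t + τ))) : g '' range f = range f := by
  have hf : f = g ∘ (f ∘ (· + τ)) := funext h
  conv_rhs => rw [hf]
  rw [range_comp, (add_right_surjective τ).range_comp]

section ConditionallyCompleteLinearOrder

variable {α : Type*} [ConditionallyCompleteLinearOrder α] [TopologicalSpace α] [OrderTopology α]
  {g : α → α} {s : Set α}

theorem Antitone.map_csInf_eq_csSup_of_image_eq (hg : Antitone g) (hc : Continuous g)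
    (hs : s.Nonempty) (hbdd : BddBelow s) (himg : g '' s = s) : g (sInf s) = sSup s := by
  rw [hg.map_csInf_of_continuousAt hc.continuousAt hs hbdd, himg]

theorem Antitone.map_csSup_eq_csInf_of_image_eq (hg : Antitone g) (hc : Continuous g)
    (hs : s.Nonempty) (hbdd : BddAbove s) (himg : g '' s = s) : g (sSup s) = sInf s := by
  rw [hg.map_csSup_of_continuousAt hc.continuousAt hs hbdd, himg]

end ConditionallyCompleteLinearOrder

theorem csInf_lt_csSup_of_ne {α : Type*} [ConditionallyCompleteLinearOrder α] {s : Set α}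
    (hb : BddBelow s) (ha : BddAbove s) {x y : α} (hx : x ∈ s) (hy : y ∈ s) (hxy : x ≠ y) :
    sInf s < sSup s := by
  rcases hxy.lt_or_gt with hlt | hlt
  · exact (csInf_le hb hx).trans_lt (hlt.trans_le (le_csSup ha hy))
  · exact (csInf_le hb hy).trans_lt (hlt.trans_le (le_csSup ha hx))

/-- If `f : ℝ → ℝ` is bounded and nonconstant and satisfies
`f(t) = a + b·f(t+τ)` for all `t` with `b < 0`, then `b = −1` and `a = sup f + inf f`. -/
theorem stmt4 (f : ℝ → ℝ) (hf : ∃ M : ℝ, ∀ t : ℝ, |f t| ≤ M)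
    (hnc : ∃ s t : ℝ, f s ≠ f t) (a b τ : ℝ) (hb : b < 0)
    (h : ∀ t : ℝ, f t = a + b * f (t + τ)) :
    b = -1 ∧ a = sSup (Set.range f) + sInf (Set.range f) := by
  obtain ⟨M, hM⟩ := hf
  obtain ⟨s, t, hst⟩ := hnc
  have hbdd : Bornology.IsBounded (range f) :=
    isBounded_iff_forall_norm_le.2 ⟨M, forall_mem_range.2 hM⟩
  have hne : (range f).Nonempty := range_nonempty f
  have hanti : Antitone (fun x : ℝ => a + b * x) := fun x y hxy => by
    simpa using mul_le_mul_of_nonpos_left hxy hb.le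
  have himg := image_range_eq_of_forall_eq_comp_add (g := fun x : ℝ => a + b * x) h
  have hinf := hanti.map_csInf_eq_csSup_of_image_eq (by fun_prop) hne hbdd.bddBelow himg
  have hsup := hanti.map_csSup_eq_csInf_of_image_eq (by fun_prop) hne hbdd.bddAbove himg
  have hlt := csInf_lt_csSup_of_ne hbdd.bddBelow hbdd.bddAbove (mem_range_self s)
    (mem_range_self t) hst
  have hb1 : b = -1 := by
    have : (b + 1) * (sInf (range f) - sSup (range f)) = 0 := by linear_combination hinf - hsup
    simpa [add_eq_zero_iff_eq_neg, sub_eq_zero, hlt.ne] using this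
  exact ⟨hb1, by subst hb1; linarith⟩
end

section
/- Let ω > 0. There is no τ ∈ ℝ such that |sin(ωt)| = 1 − |sin(ω(t+τ))| for all t ∈ ℝ. (Here 1 = sup f and 0 = inf f for f(t) = |sin(ωt)|, so f satisfies condition (P2).) -/
/-! At `t = 0` the identity forces `|sin (ωτ)| = 1`, hence `cos (ωτ) = 0`, and the shifted term
`|sin (ω (t + τ))|` becomes `|cos (ω t)|`. But `|sin x| + |cos x| = √2 ≠ 1` at `x = π / 4`. -/

open Real

lemma abs_sin_add_of_abs_sin_eq_one {a b : ℝ} (hb : |sin b| = 1) :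
    |sin (a + b)| = |cos a| := by
  have hcos : cos b = 0 := by
    have hsq : sin b ^ 2 = 1 := by rw [← sq_abs, hb, one_pow]
    nlinarith [sin_sq_add_cos_sq b]
  rw [sin_add, hcos, mul_zero, zero_add, abs_mul, hb, mul_one]

lemma one_lt_abs_sin_add_abs_cos_pi_div_four : 1 < |sin (π / 4)| + |cos (π / 4)| := by
  rw [sin_pi_div_four, cos_pi_div_four, abs_of_pos (by positivity), add_halves]
  exact one_lt_sqrt_two

lemma not_forall_abs_sin_eq_one_sub_abs_sin_add (σ : ℝ) :
    ¬ ∀ x : ℝ, |sin x| = 1 - |sin (x + σ)| := by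
  intro h
  have h0 : 0 = 1 - |sin σ| := by simpa using h 0
  have hσ : |sin σ| = 1 := by linarith
  have hπ := h (π / 4)
  rw [abs_sin_add_of_abs_sin_eq_one hσ] at hπ
  linarith [one_lt_abs_sin_add_abs_cos_pi_div_four]

/-- For `ω > 0`, there is no `τ` such that
`|sin(ωt)| = 1 − |sin(ω(t+τ))|` for all `t`; i.e. the nudging signal `f(t) = |sin(ωt)|`
(with `sup f = 1`, `inf f = 0`) satisfies condition (P2). -/
theorem stmt5 (ω : ℝ) (hω : 0 < ω) :
    ¬ ∃ τ : ℝ, ∀ t : ℝ, |Real.sin (ω * t)| = 1 - |Real.sin (ω * (t + τ))| := by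
  rintro ⟨τ, h⟩
  refine not_forall_abs_sin_eq_one_sub_abs_sin_add (ω * τ) fun x => ?_
  have hx : ω * (x / ω) = x := mul_div_cancel₀ x hω.ne'
  simpa only [mul_add, hx] using h (x / ω)
end

section
/- Let F be a real normed vector space (complete), let v⋆ : ℝ → F be three times continuously differentiable on an open neighborhood of 0, let ω > 0 and T = 2π/ω. Then the function γ ↦ (1/T)·∫₀ᵀ v⋆(γ·sin(ωt)) dt − v⋆(0) − (γ²/4)·(iteratedDeriv 2 v⋆ 0) is big-O of γ³ as γ → 0. -/
/-!
On a neighbourhood of `0`, Taylor's theorem writes `v x = v 0 + x v'(0) + (x²/2) v''(0) + R x`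
with `R x = O(x³)`. Substituting `x = γ sin(ωt)` and averaging over a period, the linear term
vanishes and the quadratic one contributes `γ²/4 · v''(0)` since `sin²` has mean `1/2`; the
average of `R (γ sin(ωt))` is `O(γ³)` because `|γ sin(ωt)| ≤ |γ|`.
-/

open MeasureTheory Asymptotics Topology Real

section

variable {E : Type*} [NormedAddCommGroup E] [NormedSpace ℝ E]

theorem taylor_isBigO {f : ℝ → E} {x₀ : ℝ} {n : ℕ} {s : Set ℝ} (hs : Convex ℝ s)
    (hx₀s : x₀ ∈ s) (hf : ContDiffOn ℝ (n + 1) f s) :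
    (fun x ↦ f x - taylorWithinEval f n s x₀ x) =O[𝓝[s] x₀] fun x ↦ (x - x₀) ^ (n + 1) := by
  have hlo := taylor_isLittleO hs hx₀s (n := n + 1) (by exact_mod_cast hf)
  set w := ((n + 1 : ℝ) * n.factorial)⁻¹ • iteratedDerivWithin (n + 1) f s x₀
  have hterm : (fun x ↦ (x - x₀) ^ (n + 1) • w) =O[𝓝[s] x₀] fun x ↦ (x - x₀) ^ (n + 1) := by
    simpa using (isBigO_refl (fun x ↦ (x - x₀) ^ (n + 1)) _).smul (isBigO_const_one ℝ w _)
  refine (hlo.isBigO.add hterm).congr_left fun x ↦ ?_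
  simp only [taylorWithinEval_succ, w, smul_smul, mul_comm]
  abel

theorem ContDiffAt.isBigO_sub_taylor_two {f : ℝ → E} {x₀ : ℝ} (hf : ContDiffAt ℝ 3 f x₀) :
    (fun x ↦ f x - (f x₀ + (x - x₀) • deriv f x₀ + ((x - x₀) ^ 2 / 2) • iteratedDeriv 2 f x₀))
      =O[𝓝 x₀] fun x ↦ (x - x₀) ^ 3 := by
  obtain ⟨u, hu, hfu⟩ := hf.contDiffOn le_rfl (by simp)
  obtain ⟨ε, hε, hball⟩ := Metric.mem_nhds_iff.1 (by simpa using hu)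
  have hT := taylor_isBigO (n := 2) (convex_ball x₀ ε) (Metric.mem_ball_self hε) (hfu.mono hball)
  rw [Metric.isOpen_ball.nhdsWithin_eq (Metric.mem_ball_self hε)] at hT
  refine hT.congr_left fun x ↦ ?_
  have hderiv (k : ℕ) (hk : k ≤ 3) :
      iteratedDerivWithin k f (Metric.ball x₀ ε) x₀ = iteratedDeriv k f x₀ :=
    iteratedDerivWithin_eq_iteratedDeriv Metric.isOpen_ball.uniqueDiffOn
      (hf.of_le (by exact_mod_cast hk)) (Metric.mem_ball_self hε)
  rw [taylor_within_apply]
  simp [Finset.sum_range_succ, hderiv, div_eq_inv_mul]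

theorem Asymptotics.IsBigO.intervalIntegral_comp_mul {r : ℝ → E} {n : ℕ}
    (hr : r =O[𝓝 0] fun x ↦ x ^ n) {φ : ℝ → ℝ} {M : ℝ} (hφ : ∀ t, |φ t| ≤ M) (a b : ℝ) :
    (fun γ ↦ ∫ t in a..b, r (γ * φ t)) =O[𝓝 0] fun γ ↦ γ ^ n := by
  obtain ⟨C, hC, hrC⟩ := hr.exists_pos
  obtain ⟨δ, hδ, hδr⟩ := Metric.eventually_nhds_iff.1 hrC.bound
  have hM : 0 ≤ M := (abs_nonneg _).trans (hφ 0)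
  refine .of_bound (C * M ^ n * |b - a|) ?_
  filter_upwards [Metric.ball_mem_nhds 0 (div_pos hδ (by linarith : 0 < M + 1))] with γ hγ
  rw [Metric.mem_ball, Real.dist_eq, sub_zero, lt_div_iff₀ (by linarith)] at hγ
  have hpoint (t : ℝ) : ‖r (γ * φ t)‖ ≤ C * M ^ n * ‖γ ^ n‖ := by
    have hsmall : |γ * φ t| ≤ |γ| * M := by
      rw [abs_mul]; exact mul_le_mul_of_nonneg_left (hφ t) (abs_nonneg γ)
    calc ‖r (γ * φ t)‖ ≤ C * ‖(γ * φ t) ^ n‖ :=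
          hδr (by rw [Real.dist_eq, sub_zero]; nlinarith [abs_nonneg γ])
      _ ≤ C * (|γ| * M) ^ n := by
          rw [norm_pow, Real.norm_eq_abs]
          gcongr
      _ = C * M ^ n * ‖γ ^ n‖ := by rw [norm_pow, Real.norm_eq_abs, mul_pow]; ring
  calc ‖∫ t in a..b, r (γ * φ t)‖ ≤ C * M ^ n * ‖γ ^ n‖ * |b - a| :=
        intervalIntegral.norm_integral_le_of_norm_le_const fun t _ ↦ hpoint t
    _ = C * M ^ n * |b - a| * ‖γ ^ n‖ := by ring

theorem integral_sin_mul_of_mul_eq_two_pi {ω T : ℝ} (h : ω * T = 2 * π) :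
    ∫ t in (0 : ℝ)..T, sin (ω * t) = 0 := by
  have hω : ω ≠ 0 := left_ne_zero_of_mul (by rw [h]; positivity)
  rw [intervalIntegral.integral_comp_mul_left (fun x ↦ sin x) hω, mul_zero, h, integral_sin,
    cos_zero, cos_two_pi, sub_self, smul_zero]

theorem integral_sin_mul_sq_of_mul_eq_two_pi {ω T : ℝ} (h : ω * T = 2 * π) :
    ∫ t in (0 : ℝ)..T, sin (ω * t) ^ 2 = T / 2 := by
  have hω : ω ≠ 0 := left_ne_zero_of_mul (by rw [h]; positivity)
  rw [intervalIntegral.integral_comp_mul_left (fun x ↦ sin x ^ 2) hω, mul_zero, h,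
    integral_sin_sq, sin_two_pi, sin_zero, smul_eq_mul]
  field_simp
  linarith

theorem integral_quadratic_comp_mul_sin [CompleteSpace E] {ω T : ℝ} (h : ω * T = 2 * π) (γ : ℝ)
    (a b c : E) :
    ∫ t in (0 : ℝ)..T, (a + (γ * sin (ω * t)) • b + ((γ * sin (ω * t)) ^ 2 / 2) • c) =
      T • a + (γ ^ 2 * T / 4) • c := by
  have hlin : Continuous fun t ↦ (γ * sin (ω * t)) • b := by fun_prop
  have hquad : Continuous fun t ↦ ((γ * sin (ω * t)) ^ 2 / 2) • c := by fun_prop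
  have hsq : ∫ t in (0 : ℝ)..T, (γ * sin (ω * t)) ^ 2 / 2 = γ ^ 2 * T / 4 := by
    simp only [mul_pow, intervalIntegral.integral_div, intervalIntegral.integral_const_mul,
      integral_sin_mul_sq_of_mul_eq_two_pi h]
    ring
  rw [intervalIntegral.integral_add (intervalIntegrable_const.add (hlin.intervalIntegrable _ _))
      (hquad.intervalIntegrable _ _),
    intervalIntegral.integral_add intervalIntegrable_const (hlin.intervalIntegrable _ _),
    intervalIntegral.integral_const, intervalIntegral.integral_smul_const,
    intervalIntegral.integral_smul_const, intervalIntegral.integral_const_mul,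
    integral_sin_mul_of_mul_eq_two_pi h, hsq, sub_zero, mul_zero, zero_smul, add_zero]

end

/-- For `v⋆ : ℝ → F` three times continuously differentiable near `0`,
`ω > 0` and `T = 2π/ω`, the Fourier coefficient
`a(γ) = (1/T)·∫₀ᵀ v⋆(γ sin(ωt)) dt` satisfies
`a(γ) − v⋆(0) − (γ²/4)·v⋆''(0) = O(γ³)` as `γ → 0`. -/
theorem stmt8 {F : Type*} [NormedAddCommGroup F] [NormedSpace ℝ F] [CompleteSpace F]
    (v : ℝ → F) (U : Set ℝ) (hU : IsOpen U) (h0 : (0 : ℝ) ∈ U)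
    (hv : ContDiffOn ℝ 3 v U) (ω T : ℝ) (hω : 0 < ω) (hT : T = 2 * Real.pi / ω) :
    Asymptotics.IsBigO (nhds (0 : ℝ))
      (fun γ : ℝ =>
        (1 / T) • (∫ t in (0 : ℝ)..T, v (γ * Real.sin (ω * t))) - v 0 -
          (γ ^ 2 / 4) • iteratedDeriv 2 v 0)
      (fun γ : ℝ => γ ^ 3) := by
  have hωT : ω * T = 2 * π := by rw [hT]; field_simp
  have hT0 : T ≠ 0 := by rw [hT]; positivity
  set P : ℝ → F := fun x ↦ v 0 + x • deriv v 0 + (x ^ 2 / 2) • iteratedDeriv 2 v 0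
  have hR : (fun x ↦ v x - P x) =O[𝓝 0] fun x ↦ x ^ 3 := by
    simpa using (hv.contDiffAt (hU.mem_nhds h0)).isBigO_sub_taylor_two
  refine ((hR.intervalIntegral_comp_mul (fun t ↦ abs_sin_le_one (ω * t)) 0 T).const_smul_left
    (1 / T)).congr' ?_ .rfl
  -- The integral splits only where `v (γ sin(ωt))` is integrable, hence only for small `γ`.
  obtain ⟨ε, hε, hball⟩ := Metric.isOpen_iff.1 hU 0 h0
  filter_upwards [Metric.ball_mem_nhds 0 hε] with γ hγ
  have hvγ : IntervalIntegrable (fun t ↦ v (γ * sin (ω * t))) volume 0 T := by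
    refine (hv.continuousOn.comp_continuous (by fun_prop) fun t ↦ hball ?_).intervalIntegrable _ _
    rw [mem_ball_zero_iff, norm_mul]
    exact (mul_le_of_le_one_right (norm_nonneg γ) (abs_sin_le_one _)).trans_lt
      (mem_ball_zero_iff.1 hγ)
  have hPγ : IntervalIntegrable (fun t ↦ P (γ * sin (ω * t))) volume 0 T :=
    (by fun_prop : Continuous fun t ↦ P (γ * sin (ω * t))).intervalIntegrable _ _
  rw [Pi.smul_apply, intervalIntegral.integral_sub hvγ hPγ, integral_quadratic_comp_mul_sin hωT,
    smul_sub, smul_add, smul_smul, smul_smul, one_div, inv_mul_cancel₀ hT0, one_smul, sub_sub]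
  congr 3
  field_simp
end

section
/- Let F be a real normed vector space (complete), let v⋆ : ℝ → F be three times continuously differentiable on an open neighborhood of 0, let ω > 0 and T = 2π/ω. Then the function γ ↦ (2/T)·∫₀ᵀ sin(ωt) • v⋆(γ·sin(ωt)) dt − γ • (deriv v⋆ 0) is big-O of γ³ as γ → 0. -/
/-!
By Taylor's theorem, `v x = v 0 + x • v'(0) + (x² / 2) • v''(0) + R x` with `R x = O(x³)`.
Over a full period, `sin (ω t)`, `sin (ω t) ^ 2` and `sin (ω t) ^ 3` integrate to `0`, `T / 2`
and `0`, so the quadratic Taylor polynomial contributes exactly `γ • v'(0)` to the sine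
coefficient, while the remainder contributes `O(γ³)` because `|γ sin (ω t)| ≤ |γ|`.
-/

open MeasureTheory Asymptotics Filter Topology Set Nat Real

section

variable {E : Type*} [NormedAddCommGroup E] [NormedSpace ℝ E]

theorem taylorWithinEval_of_isOpen {f : ℝ → E} {s : Set ℝ} {x₀ : ℝ} (hs : IsOpen s)
    (hx₀ : x₀ ∈ s) (n : ℕ) (x : ℝ) :
    taylorWithinEval f n s x₀ x = taylorWithinEval f n univ x₀ x := by
  simp only [taylor_within_apply, iteratedDerivWithin_univ, iteratedDerivWithin_of_isOpen hs hx₀]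

theorem ContDiffAt.isBigO_sub_taylorWithinEval {f : ℝ → E} {x₀ : ℝ} {n : ℕ}
    (hf : ContDiffAt ℝ (n + 1) f x₀) :
    (fun x => f x - taylorWithinEval f n univ x₀ x) =O[𝓝 x₀] fun x => (x - x₀) ^ (n + 1) := by
  obtain ⟨u, hu, hfu⟩ := hf.contDiffOn le_rfl (by simp)
  obtain ⟨ε, hε, hball⟩ := Metric.mem_nhds_iff.1 hu
  have hlittle := taylor_isLittleO (convex_ball x₀ ε) (Metric.mem_ball_self hε)
    (hfu.mono hball) (n := n + 1)
  rw [nhdsWithin_eq_nhds.2 (Metric.ball_mem_nhds x₀ hε)] at hlittle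
  have hterm : (fun x => (((n + 1 : ℝ) * n !)⁻¹ * (x - x₀) ^ (n + 1)) •
      iteratedDerivWithin (n + 1) f (Metric.ball x₀ ε) x₀) =O[𝓝 x₀] fun x => (x - x₀) ^ (n + 1) :=
    ((isBigO_refl _ _).const_mul_left _).smul (isBigO_const_const _ one_ne_zero _)
      |>.congr_right fun x => by simp
  refine (hlittle.isBigO.add hterm).congr_left fun x => ?_
  rw [taylorWithinEval_succ,
    taylorWithinEval_of_isOpen Metric.isOpen_ball (Metric.mem_ball_self hε)]
  abel

theorem taylorWithinEval_two_univ (f : ℝ → E) (x₀ x : ℝ) :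
    taylorWithinEval f 2 univ x₀ x =
      f x₀ + (x - x₀) • deriv f x₀ + ((x - x₀) ^ 2 / 2) • deriv (deriv f) x₀ := by
  simp [taylor_within_apply, iteratedDerivWithin_univ, iteratedDeriv_succ, div_eq_inv_mul]
  norm_num

theorem Asymptotics.IsBigO.intervalIntegral_smul_comp_mul {R : ℝ → E} {n : ℕ}
    (hR : R =O[𝓝 0] fun x => x ^ n) {s : ℝ → ℝ} (hs : ∀ t, |s t| ≤ 1) (a b : ℝ) :
    (fun γ => ∫ t in a..b, s t • R (γ * s t)) =O[𝓝 0] fun γ => γ ^ n := by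
  obtain ⟨C, hC, hRC⟩ := hR.exists_nonneg
  obtain ⟨ε, hε, hball⟩ := Metric.eventually_nhds_iff_ball.1 hRC.bound
  refine IsBigO.of_bound (C * |b - a|) (Metric.eventually_nhds_iff_ball.2 ⟨ε, hε, fun γ hγ => ?_⟩)
  have hscaled : ∀ t, |γ * s t| ≤ |γ| := fun t => by
    simpa [abs_mul] using mul_le_mul_of_nonneg_left (hs t) (abs_nonneg γ)
  calc ‖∫ t in a..b, s t • R (γ * s t)‖ ≤ C * |γ| ^ n * |b - a| := by
        refine intervalIntegral.norm_integral_le_of_norm_le_const fun t _ => ?_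
        have hmem : γ * s t ∈ Metric.ball 0 ε := by
          simpa using (hscaled t).trans_lt (by simpa using hγ)
        calc ‖s t • R (γ * s t)‖ = |s t| * ‖R (γ * s t)‖ := norm_smul _ _
          _ ≤ 1 * (C * |γ * s t| ^ n) := by
            gcongr
            · exact hs t
            · simpa using hball _ hmem
          _ ≤ C * |γ| ^ n := by
            rw [one_mul]
            exact mul_le_mul_of_nonneg_left (pow_le_pow_left₀ (abs_nonneg _) (hscaled t) n) hC
    _ = C * |b - a| * ‖γ ^ n‖ := by rw [norm_pow, norm_eq_abs]; ring

theorem integral_sin_mul_pow_period {ω : ℝ} (hω : ω ≠ 0) (n : ℕ) :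
    ∫ t in (0 : ℝ)..2 * π / ω, sin (ω * t) ^ n = ω⁻¹ * ∫ x in (0 : ℝ)..2 * π, sin x ^ n := by
  rw [intervalIntegral.integral_comp_mul_left (fun x => sin x ^ n) hω, mul_zero,
    mul_div_cancel₀ _ hω, smul_eq_mul]

theorem integral_sin_pow_one_period : ∫ x in (0 : ℝ)..2 * π, sin x ^ 1 = 0 := by
  simp [integral_sin]

theorem integral_sin_pow_two_period : ∫ x in (0 : ℝ)..2 * π, sin x ^ 2 = π := by
  simp [integral_sin_sq]

theorem integral_sin_pow_three_period : ∫ x in (0 : ℝ)..2 * π, sin x ^ 3 = 0 := by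
  simp [integral_sin_pow (n := 1), integral_sin]

variable [CompleteSpace E]

theorem integral_sin_smul_quadratic {ω : ℝ} (hω : ω ≠ 0) (γ : ℝ) (a b c : E) :
    ∫ t in (0 : ℝ)..2 * π / ω,
        sin (ω * t) • (a + (γ * sin (ω * t)) • b + ((γ * sin (ω * t)) ^ 2 / 2) • c) =
      (γ * (π / ω)) • b := by
  have hexpand : ∀ t,
      sin (ω * t) • (a + (γ * sin (ω * t)) • b + ((γ * sin (ω * t)) ^ 2 / 2) • c) =
        sin (ω * t) ^ 1 • a + (γ * sin (ω * t) ^ 2) • b + (γ ^ 2 / 2 * sin (ω * t) ^ 3) • c := by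
    intro t
    match_scalars <;> ring
  simp_rw [hexpand]
  rw [intervalIntegral.integral_add, intervalIntegral.integral_add,
    intervalIntegral.integral_smul_const, intervalIntegral.integral_smul_const,
    intervalIntegral.integral_smul_const, intervalIntegral.integral_const_mul,
    intervalIntegral.integral_const_mul, integral_sin_mul_pow_period hω,
    integral_sin_mul_pow_period hω, integral_sin_mul_pow_period hω, integral_sin_pow_one_period,
    integral_sin_pow_two_period, integral_sin_pow_three_period]
  · simp [div_eq_inv_mul]
  all_goals exact Continuous.intervalIntegrable (by fun_prop) _ _

theorem integral_sin_smul_sub_quadratic {ω : ℝ} (hω : ω ≠ 0) {f : ℝ → E} {γ : ℝ}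
    (hf : Continuous fun t => f (γ * sin (ω * t))) (a b c : E) :
    (2 / (2 * π / ω)) • ∫ t in (0 : ℝ)..2 * π / ω, sin (ω * t) •
        (f (γ * sin (ω * t)) -
          (a + (γ * sin (ω * t)) • b + ((γ * sin (ω * t)) ^ 2 / 2) • c)) =
      (2 / (2 * π / ω)) • (∫ t in (0 : ℝ)..2 * π / ω, sin (ω * t) • f (γ * sin (ω * t))) -
        γ • b := by
  simp_rw [smul_sub]
  rw [intervalIntegral.integral_sub, integral_sin_smul_quadratic hω, smul_sub, smul_smul]
  · congr 2
    field_simp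
  · exact ((continuous_sin.comp (continuous_const_mul ω)).smul hf).intervalIntegrable _ _
  · exact (by fun_prop : Continuous _).intervalIntegrable _ _

end

/-- For `v⋆ : ℝ → F` three times continuously differentiable near `0`,
`ω > 0` and `T = 2π/ω`, the Fourier coefficient
`b(γ) = (2/T)·∫₀ᵀ sin(ωt) • v⋆(γ sin(ωt)) dt` satisfies
`b(γ) − γ • v⋆'(0) = O(γ³)` as `γ → 0`. -/
theorem stmt9 {F : Type*} [NormedAddCommGroup F] [NormedSpace ℝ F] [CompleteSpace F]
    (v : ℝ → F) (U : Set ℝ) (hU : IsOpen U) (h0 : (0 : ℝ) ∈ U)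
    (hv : ContDiffOn ℝ 3 v U) (ω T : ℝ) (hω : 0 < ω) (hT : T = 2 * Real.pi / ω) :
    Asymptotics.IsBigO (nhds (0 : ℝ))
      (fun γ : ℝ =>
        (2 / T) • (∫ t in (0 : ℝ)..T, Real.sin (ω * t) • v (γ * Real.sin (ω * t))) -
          γ • deriv v 0)
      (fun γ : ℝ => γ ^ 3) := by
  subst hT
  have hR : (fun x => v x - (v 0 + x • deriv v 0 + (x ^ 2 / 2) • deriv (deriv v) 0))
      =O[𝓝 0] fun x => x ^ 3 := by
    simpa only [taylorWithinEval_two_univ, sub_zero] using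
      (hv.contDiffAt (hU.mem_nhds h0)).isBigO_sub_taylorWithinEval (n := 2)
  obtain ⟨ε, hε, hball⟩ := Metric.isOpen_iff.1 hU 0 h0
  have hcont : ∀ γ ∈ Metric.ball (0 : ℝ) ε, Continuous fun t => v (γ * sin (ω * t)) := by
    intro γ hγ
    refine hv.continuousOn.comp_continuous (by fun_prop) fun t => hball ?_
    rw [mem_ball_zero_iff] at hγ ⊢
    rw [norm_mul]
    exact (mul_le_of_le_one_right (norm_nonneg γ) (abs_sin_le_one _)).trans_lt hγ
  exact ((hR.intervalIntegral_smul_comp_mul (fun t => abs_sin_le_one _) 0 _).const_smul_left _)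
    |>.congr' (eventually_of_mem (Metric.ball_mem_nhds 0 hε) fun γ hγ =>
      integral_sin_smul_sub_quadratic hω.ne' (hcont γ hγ) _ _ _) EventuallyEq.rfl
end

section
/- (Equilibrium propagation formula.) Let Θ = EuclideanSpace ℝ (Fin m) and V = EuclideanSpace ℝ (Fin n). Let E : Θ → V → ℝ be C² as a function on Θ × V, let C : V → ℝ be C¹, and let v⋆ : Θ → ℝ → V be C¹ as a function on Θ × ℝ, satisfying for all θ ∈ Θ and β ∈ ℝ the equilibrium condition gradient (fun w => E θ w + β·C w) (v⋆ θ β) = 0. Define the loss L : Θ → ℝ by L θ = C (v⋆ θ 0). Then for all θ ∈ Θ and all directions h ∈ Θ, fderiv ℝ L θ h = deriv (fun β => fderiv ℝ (fun θ' => E θ' (v⋆ θ β)) θ h) 0. -/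
/-!
Let `F θ β = E θ (v θ β) + β C (v θ β)` be the total energy at equilibrium. Since `v θ β` is a
critical point of `w ↦ E θ w + β C w`, the envelope theorem gives `∂F/∂θ = ∂E/∂θ (θ, v θ β)` and
`∂F/∂β = C (v θ β)`; at `β = 0` the latter is `L θ`.
The formula is then the symmetry of the mixed second partial derivatives of `F`.
-/

open ContinuousLinearMap

theorem gradient_eq_zero_iff_fderiv_eq_zero {𝕜 F : Type*} [RCLike 𝕜] [NormedAddCommGroup F]
    [InnerProductSpace 𝕜 F] [CompleteSpace F] {f : F → 𝕜} {x : F} :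
    gradient f x = 0 ↔ fderiv 𝕜 f x = 0 :=
  (InnerProductSpace.toDual 𝕜 F).symm.map_eq_zero_iff

theorem hasFDerivAt_comp_prodMk_of_fderiv_snd_eq_zero {𝕜 P V G : Type*}
    [NontriviallyNormedField 𝕜] [NormedAddCommGroup P] [NormedSpace 𝕜 P] [NormedAddCommGroup V]
    [NormedSpace 𝕜 V] [NormedAddCommGroup G] [NormedSpace 𝕜 G] {f : P × V → G} {w : P → V} {p : P}
    (hf : DifferentiableAt 𝕜 f (p, w p)) (hw : DifferentiableAt 𝕜 w p)
    (hcrit : fderiv 𝕜 (fun y => f (p, y)) (w p) = 0) :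
    HasFDerivAt (fun q => f (q, w q)) (fderiv 𝕜 (fun q => f (q, w p)) p) p := by
  set D := fderiv 𝕜 f (p, w p)
  have hfst : fderiv 𝕜 (fun q => f (q, w p)) p = D.comp (inl 𝕜 P V) :=
    (hf.hasFDerivAt.comp p (hasFDerivAt_prodMk_left p (w p))).fderiv
  have hsnd : D.comp (inr 𝕜 P V) = 0 :=
    (hf.hasFDerivAt.comp (w p) (hasFDerivAt_prodMk_right p (w p))).fderiv.symm.trans hcrit
  refine (hf.hasFDerivAt.comp p ((hasFDerivAt_id p).prodMk hw.hasFDerivAt)).congr_fderiv ?_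
  ext x
  have hx : D (0, fderiv 𝕜 w p x) = 0 := congrArg (· (fderiv 𝕜 w p x)) hsnd
  calc D (x, fderiv 𝕜 w p x) = D (x, 0) + D (0, fderiv 𝕜 w p x) := by
        rw [← map_add, Prod.mk_add_mk, add_zero, zero_add]
    _ = fderiv 𝕜 (fun q => f (q, w p)) p x := by simp [hfst, hx]

theorem fderiv_partial_snd_eq_deriv_partial_fst {𝕜 X G : Type*} [NontriviallyNormedField 𝕜]
    [IsRCLikeNormedField 𝕜] [NormedAddCommGroup X] [NormedSpace 𝕜 X] [NormedAddCommGroup G]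
    [NormedSpace 𝕜 G] {F : X × 𝕜 → G} {F' : X × 𝕜 → X × 𝕜 →L[𝕜] G}
    (hF : ∀ p, HasFDerivAt F (F' p) p) {x : X} {t : 𝕜} (hF' : DifferentiableAt 𝕜 F' (x, t))
    (h : X) :
    fderiv 𝕜 (fun x' => F' (x', t) (0, 1)) x h = deriv (fun s => F' (x, s) (h, 0)) t := by
  set F'' := fderiv 𝕜 F' (x, t)
  have hx : HasFDerivAt (fun x' => F' (x', t) (0, 1)) ((F''.comp (inl 𝕜 X 𝕜)).flip (0, 1)) x := by
    have hslice : HasFDerivAt (fun x' => F' (x', t)) (F''.comp (inl 𝕜 X 𝕜)) x :=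
      hF'.hasFDerivAt.comp x (hasFDerivAt_prodMk_left x t)
    simpa using hslice.clm_apply (hasFDerivAt_const ((0 : X), (1 : 𝕜)) x)
  have ht : HasDerivAt (fun s => F' (x, s) (h, 0)) (F'' (0, 1) (h, 0)) t := by
    simpa using (hF'.hasFDerivAt.comp_hasDerivAt t
      ((hasDerivAt_const t x).prodMk (hasDerivAt_id t))).clm_apply (hasDerivAt_const t (h, 0))
  rw [hx.fderiv, ht.deriv]
  simpa using second_derivative_symmetric hF hF'.hasFDerivAt (h, 0) (0, 1)

theorem hasFDerivAt_comp_fst_add_snd_mul_const {X : Type*} [NormedAddCommGroup X]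
    [NormedSpace ℝ X] {a : X → ℝ} {x : X} (ha : DifferentiableAt ℝ a x) (c t : ℝ) :
    HasFDerivAt (fun q : X × ℝ => a q.1 + q.2 * c)
      ((fderiv ℝ a x).comp (fst ℝ X ℝ) + c • snd ℝ X ℝ) (x, t) :=
  (HasFDerivAt.comp (x, t) (g := a) ha.hasFDerivAt hasFDerivAt_fst).add
    (hasFDerivAt_snd.mul_const c)

section EquilibriumPropagation

variable {Θ V : Type*} [NormedAddCommGroup Θ] [NormedSpace ℝ Θ] [NormedAddCommGroup V]
  [NormedSpace ℝ V] {E : Θ → V → ℝ} {C : V → ℝ} {v : Θ → ℝ → V}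

theorem hasFDerivAt_equilibriumEnergy (hE : Differentiable ℝ fun p : Θ × V => E p.1 p.2)
    (hC : Differentiable ℝ C) (hv : Differentiable ℝ fun p : Θ × ℝ => v p.1 p.2) {p : Θ × ℝ}
    (hcrit : fderiv ℝ (fun w => E p.1 w + p.2 * C w) (v p.1 p.2) = 0) :
    HasFDerivAt (fun q : Θ × ℝ => E q.1 (v q.1 q.2) + q.2 * C (v q.1 q.2))
      ((fderiv ℝ (fun θ' => E θ' (v p.1 p.2)) p.1).comp (fst ℝ Θ ℝ)
        + C (v p.1 p.2) • snd ℝ Θ ℝ) p := by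
  have hEθ : DifferentiableAt ℝ (fun θ' => E θ' (v p.1 p.2)) p.1 := by fun_prop
  rw [← (hasFDerivAt_comp_fst_add_snd_mul_const hEθ (C (v p.1 p.2)) p.2).fderiv]
  exact hasFDerivAt_comp_prodMk_of_fderiv_snd_eq_zero
    (f := fun x : (Θ × ℝ) × V => E x.1.1 x.2 + x.1.2 * C x.2) (by fun_prop) (hv p) hcrit

theorem differentiable_fderiv_param_equilibriumEnergy
    (hE : ContDiff ℝ 2 fun p : Θ × V => E p.1 p.2) (hC : Differentiable ℝ C)
    (hv : Differentiable ℝ fun p : Θ × ℝ => v p.1 p.2) :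
    Differentiable ℝ fun p : Θ × ℝ =>
      (fderiv ℝ (fun θ' => E θ' (v p.1 p.2)) p.1).comp (fst ℝ Θ ℝ)
        + C (v p.1 p.2) • snd ℝ Θ ℝ := by
  have hEθ : Differentiable ℝ fun x : Θ × V => fderiv ℝ (fun θ' => E θ' x.2) x.1 :=
    Differentiable.fderiv_two (f := fun x θ' => E θ' x.2)
      (hE.comp (contDiff_snd.prodMk (contDiff_snd.comp contDiff_fst))) contDiff_fst
  have hslice := hEθ.comp (differentiable_fst.prodMk hv)
  fun_prop

end EquilibriumPropagation

/-- Equilibrium propagation formula: with `E : Θ → V → ℝ` C², `C : V → ℝ` C¹,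
`v⋆ : Θ → ℝ → V` C¹ jointly, and the equilibrium condition
`∇_w (E θ w + β·C w) |_{w = v⋆ θ β} = 0` for all `θ, β`, the loss `L θ = C (v⋆ θ 0)` satisfies
`∂L/∂θ · h = d/dβ |_{β=0} (∂/∂θ E(θ, v⋆ θ β)) · h`. -/
theorem stmt11 {m n : ℕ}
    (E : EuclideanSpace ℝ (Fin m) → EuclideanSpace ℝ (Fin n) → ℝ)
    (hE : ContDiff ℝ 2
      (fun p : EuclideanSpace ℝ (Fin m) × EuclideanSpace ℝ (Fin n) => E p.1 p.2))
    (C : EuclideanSpace ℝ (Fin n) → ℝ) (hC : ContDiff ℝ 1 C)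
    (v : EuclideanSpace ℝ (Fin m) → ℝ → EuclideanSpace ℝ (Fin n))
    (hv : ContDiff ℝ 1 (fun p : EuclideanSpace ℝ (Fin m) × ℝ => v p.1 p.2))
    (heq : ∀ (θ : EuclideanSpace ℝ (Fin m)) (β : ℝ),
      gradient (fun w => E θ w + β * C w) (v θ β) = 0)
    (L : EuclideanSpace ℝ (Fin m) → ℝ)
    (hL : ∀ θ, L θ = C (v θ 0)) :
    ∀ (θ h : EuclideanSpace ℝ (Fin m)),
      fderiv ℝ L θ h = deriv (fun β : ℝ => fderiv ℝ (fun θ' => E θ' (v θ β)) θ h) 0 := by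
  intro θ h
  have hCd := hC.differentiable one_ne_zero
  have hvd := hv.differentiable one_ne_zero
  have hmixed := fderiv_partial_snd_eq_deriv_partial_fst
    (fun p => hasFDerivAt_equilibriumEnergy (hE.differentiable two_ne_zero) hCd hvd
      (gradient_eq_zero_iff_fderiv_eq_zero.mp (heq p.1 p.2)))
    (differentiable_fderiv_param_equilibriumEnergy hE hCd hvd (θ, 0)) h
  simpa [funext hL] using hmixed
end

section
/- (Learning via chemical signaling performs exact gradient descent, abstract form.) Let Θ = EuclideanSpace ℝ (Fin m) and V = EuclideanSpace ℝ (Fin n). Let E : Θ → V → ℝ be C² on Θ × V, let C : V → ℝ be differentiable, and let v : Θ → V be differentiable with gradient (E θ) (v θ) = 0 for all θ ∈ Θ. Fix θ₀ ∈ Θ, β ∈ ℝ, and suppose u ∈ V satisfies the stationary chemical-concentration equation fderiv ℝ (fun w => gradient (E θ₀) w) (v θ₀) u = −β • gradient C (v θ₀). Define L : Θ → ℝ by L θ = C (v θ). Then for every direction h ∈ Θ, ⟪u, fderiv ℝ (fun θ' => gradient (E θ') (v θ₀)) θ₀ h⟫ = β · (fderiv ℝ L θ₀ h). -/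
/-!
Differentiating the equilibrium condition `∇_w E(θ, v θ) = 0` in `θ` gives
`∂_θ ∇_w E · h = -∂²_w E · (Dv h)`. Pairing with `u` and using the symmetry of the second
derivative moves the Hessian onto `u`, where the stationary equation replaces `∂²_w E · u` by
`-β ∇C`; what remains is `β ⟪∇C, Dv h⟫ = β DL h` (the adjoint method).
-/

open scoped RealInnerProductSpace

section
open ContinuousLinearMap

variable {Θ V : Type*} [NormedAddCommGroup Θ] [NormedSpace ℝ Θ]
  [NormedAddCommGroup V] [InnerProductSpace ℝ V] [CompleteSpace V]

variable (Θ V) in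
noncomputable def gradientSndL : ((Θ × V) →L[ℝ] ℝ) →L[ℝ] V :=
  ((InnerProductSpace.toDual ℝ V).symm.toContinuousLinearEquiv :
      StrongDual ℝ V ≃L[ℝ] V).toContinuousLinearMap ∘L
    precomp ℝ (inr ℝ Θ V)

variable {E : Θ → V → ℝ}

theorem inner_gradientSndL (ℓ : (Θ × V) →L[ℝ] ℝ) (k : V) :
    ⟪gradientSndL Θ V ℓ, k⟫ = ℓ (0, k) :=
  InnerProductSpace.toDual_symm_apply

theorem gradient_eq_gradientSndL_fderiv {θ : Θ} {w : V}
    (hE : DifferentiableAt ℝ (fun p : Θ × V => E p.1 p.2) (θ, w)) :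
    gradient (E θ) w = gradientSndL Θ V (fderiv ℝ (fun p : Θ × V => E p.1 p.2) (θ, w)) := by
  have : HasFDerivAt (E θ)
      ((fderiv ℝ (fun p : Θ × V => E p.1 p.2) (θ, w)).comp (inr ℝ Θ V)) w :=
    hE.hasFDerivAt.comp w (hasFDerivAt_prodMk_right θ w)
  rw [gradient, this.fderiv]
  rfl

theorem hasFDerivAt_gradient_of_contDiff
    (hE : ContDiff ℝ 2 (fun p : Θ × V => E p.1 p.2)) (p : Θ × V) :
    HasFDerivAt (fun p : Θ × V => gradient (E p.1) p.2)
      (gradientSndL Θ V ∘L fderiv ℝ (fderiv ℝ (fun p : Θ × V => E p.1 p.2)) p) p := by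
  have hgrad : (fun p : Θ × V => gradient (E p.1) p.2) =
      fun p => gradientSndL Θ V (fderiv ℝ (fun p : Θ × V => E p.1 p.2) p) :=
    funext fun p => gradient_eq_gradientSndL_fderiv (hE.differentiable two_ne_zero _)
  rw [hgrad]
  exact (gradientSndL Θ V).hasFDerivAt.comp p
    ((hE.fderiv_right one_add_one_eq_two.le).differentiable one_ne_zero p).hasFDerivAt

theorem fderiv_gradient_fst_apply (hE : ContDiff ℝ 2 (fun p : Θ × V => E p.1 p.2))
    (θ : Θ) (w : V) (h : Θ) :
    fderiv ℝ (fun θ' => gradient (E θ') w) θ h =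
      gradientSndL Θ V (fderiv ℝ (fderiv ℝ (fun p : Θ × V => E p.1 p.2)) (θ, w) (h, 0)) :=
  congrArg (· h) ((hasFDerivAt_gradient_of_contDiff hE (θ, w)).comp θ
    (f := fun θ' => (θ', w)) (hasFDerivAt_prodMk_left θ w)).fderiv

theorem fderiv_gradient_snd_apply (hE : ContDiff ℝ 2 (fun p : Θ × V => E p.1 p.2))
    (θ : Θ) (w k : V) :
    fderiv ℝ (fun w' => gradient (E θ) w') w k =
      gradientSndL Θ V (fderiv ℝ (fderiv ℝ (fun p : Θ × V => E p.1 p.2)) (θ, w) (0, k)) :=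
  congrArg (· k) ((hasFDerivAt_gradient_of_contDiff hE (θ, w)).comp w
    (f := fun w' => (θ, w')) (hasFDerivAt_prodMk_right θ w)).fderiv

theorem gradientSndL_fderiv_fderiv_apply_graph_eq_zero
    (hE : ContDiff ℝ 2 (fun p : Θ × V => E p.1 p.2)) {v : Θ → V} {θ : Θ}
    (hv : DifferentiableAt ℝ v θ) (heq : ∀ θ, gradient (E θ) (v θ) = 0) (h : Θ) :
    gradientSndL Θ V
      (fderiv ℝ (fderiv ℝ (fun p : Θ × V => E p.1 p.2)) (θ, v θ) (h, fderiv ℝ v θ h)) = 0 := by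
  have hgraph := (hasFDerivAt_gradient_of_contDiff hE (θ, v θ)).comp θ
    ((hasFDerivAt_id θ).prodMk hv.hasFDerivAt)
  have hconst : HasFDerivAt (fun θ => gradient (E θ) (v θ)) (0 : Θ →L[ℝ] V) θ := by
    simpa only [heq] using hasFDerivAt_const (0 : V) θ
  exact congrArg (· h) (hgraph.unique hconst)

theorem inner_fderiv_gradient_eq_mul_fderiv_comp
    (hE : ContDiff ℝ 2 (fun p : Θ × V => E p.1 p.2)) {C : V → ℝ} {v : Θ → V} {θ₀ : Θ}
    (hC : DifferentiableAt ℝ C (v θ₀)) (hv : DifferentiableAt ℝ v θ₀)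
    (heq : ∀ θ, gradient (E θ) (v θ) = 0) {β : ℝ} {u : V}
    (hu : fderiv ℝ (fun w => gradient (E θ₀) w) (v θ₀) u = -β • gradient C (v θ₀)) (h : Θ) :
    ⟪u, fderiv ℝ (fun θ' => gradient (E θ') (v θ₀)) θ₀ h⟫ =
      β * fderiv ℝ (fun θ => C (v θ)) θ₀ h := by
  set D2 := fderiv ℝ (fderiv ℝ (fun p : Θ × V => E p.1 p.2)) (θ₀, v θ₀)
  set k := fderiv ℝ v θ₀ h
  have hsymm : D2 (0, k) (0, u) = D2 (0, u) (0, k) :=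
    hE.contDiffAt.isSymmSndFDerivAt (by simp) _ _
  have hequil : D2 (h, k) (0, u) = 0 := by
    rw [← inner_gradientSndL, gradientSndL_fderiv_fderiv_apply_graph_eq_zero hE hv heq,
      inner_zero_left]
  have hL : fderiv ℝ (fun θ => C (v θ)) θ₀ h = ⟪gradient C (v θ₀), k⟫ := by
    rw [fderiv_fun_comp θ₀ hC hv, comp_apply, ← toDual_gradient,
      InnerProductSpace.toDual_apply_apply]
  calc ⟪u, fderiv ℝ (fun θ' => gradient (E θ') (v θ₀)) θ₀ h⟫
      = D2 (h, 0) (0, u) := by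
        rw [real_inner_comm, fderiv_gradient_fst_apply hE, inner_gradientSndL]
    _ = D2 (h, k) (0, u) - D2 (0, k) (0, u) := by
        rw [← sub_apply, ← map_sub, Prod.mk_sub_mk, sub_zero, sub_self]
    _ = -⟪fderiv ℝ (fun w => gradient (E θ₀) w) (v θ₀) u, k⟫ := by
        rw [hequil, hsymm, fderiv_gradient_snd_apply hE, inner_gradientSndL, zero_sub]
    _ = β * fderiv ℝ (fun θ => C (v θ)) θ₀ h := by
        rw [hu, hL, real_inner_smul_left]
        ring

end

/-- Learning via chemical signaling performs exact gradient descent,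
abstract form: with `E : Θ → V → ℝ` C², `C` differentiable, equilibrium map `v` with
`∇_w E(θ, ·) |_{v θ} = 0`, and chemical concentration `u` satisfying the stationary
equation `Hess_w E(θ₀, ·)|_{v θ₀} u = −β • ∇C(v θ₀)`, the loss `L θ = C (v θ)` satisfies
`⟪u, ∂/∂θ [∇_w E(θ', ·) at v θ₀] · h⟫ = β · (∂L/∂θ · h)` for every direction `h`. -/
theorem stmt15 {m n : ℕ}
    (E : EuclideanSpace ℝ (Fin m) → EuclideanSpace ℝ (Fin n) → ℝ)
    (hE : ContDiff ℝ 2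
      (fun p : EuclideanSpace ℝ (Fin m) × EuclideanSpace ℝ (Fin n) => E p.1 p.2))
    (C : EuclideanSpace ℝ (Fin n) → ℝ) (hC : Differentiable ℝ C)
    (v : EuclideanSpace ℝ (Fin m) → EuclideanSpace ℝ (Fin n)) (hv : Differentiable ℝ v)
    (heq : ∀ θ : EuclideanSpace ℝ (Fin m), gradient (E θ) (v θ) = 0)
    (θ₀ : EuclideanSpace ℝ (Fin m)) (β : ℝ) (u : EuclideanSpace ℝ (Fin n))
    (hu : fderiv ℝ (fun w => gradient (E θ₀) w) (v θ₀) u = -β • gradient C (v θ₀))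
    (L : EuclideanSpace ℝ (Fin m) → ℝ) (hL : ∀ θ, L θ = C (v θ)) :
    ∀ h : EuclideanSpace ℝ (Fin m),
      ⟪u, fderiv ℝ (fun θ' => gradient (E θ') (v θ₀)) θ₀ h⟫ = β * fderiv ℝ L θ₀ h := by
  obtain rfl : L = fun θ => C (v θ) := funext hL
  exact inner_fderiv_gradient_eq_mul_fderiv_comp hE (hC _) (hv _) heq hu
end

section
/- (Learning via chemical signaling, flow-network form.) Let V = EuclideanSpace ℝ (Fin N), let S be a finite set of ordered pairs (j,k) of nodes in Fin N, let x : Fin N → ℝ, let E_nl : V → ℝ be C², and for conductances θ : S → ℝ define E θ w = E_nl w + (1/2)·Σ_{(j,k)∈S} θ (j,k)·(w j − w k)² + Σ_j x j · w j. Let C : V → ℝ be differentiable, let v : (S → ℝ) → V be differentiable with gradient (E θ) (v θ) = 0 for all θ, fix θ₀ and β ∈ ℝ, and suppose u ∈ V satisfies fderiv ℝ (fun w => gradient (E θ₀) w) (v θ₀) u = −β • gradient C (v θ₀). Define L θ = C (v θ). Then for every edge (j,k) ∈ S, (u j − u k)·(v θ₀ j − v θ₀ k) = β · (fderiv ℝ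 L θ₀ (δ_{(j,k)})), where δ_{(j,k)} : S → ℝ is the indicator of the edge (j,k). -/
/-!
Along the line `θ₀ + t δ` the energy changes only by `t · ½ (w_j − w_k)²`, so the equilibrium
condition reads `∇E_{θ₀}(v(θ₀ + t δ)) = −t (v_j − v_k)(e_j − e_k)`. Differentiating at `t = 0`
gives `H (Dv δ) = −(v_j − v_k)(e_j − e_k)` for the Hessian `H` of `E_{θ₀}` at `v θ₀`. As `H` is
symmetric, `⟪H u, Dv δ⟫ = −(u_j − u_k)(v_j − v_k)`, while the equation defining `u` turns the same
number into `−β ⟪∇C, Dv δ⟫ = −β ∂L/∂θ_{jk}`.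
-/

open InnerProductSpace

section Gradient

variable {F : Type*} [NormedAddCommGroup F] [InnerProductSpace ℝ F] [CompleteSpace F]

theorem ContDiff.differentiable_gradient {f : F → ℝ} (hf : ContDiff ℝ 2 f) :
    Differentiable ℝ (gradient f) :=
  (toDual ℝ F).symm.differentiable.comp
    ((hf.fderiv_right (m := 1) (by norm_num)).differentiable one_ne_zero)

theorem inner_fderiv_gradient_comm {f : F → ℝ} {p : F} (hf : ContDiffAt ℝ 2 f p) (a b : F) :
    ⟪fderiv ℝ (gradient f) p a, b⟫_ℝ = ⟪fderiv ℝ (gradient f) p b, a⟫_ℝ := by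
  have hdual : ∀ c, fderiv ℝ (gradient f) p c =
      (toDual ℝ F).symm (fderiv ℝ (fderiv ℝ f) p c) := by
    intro c
    rw [show gradient f = (toDual ℝ F).symm ∘ fderiv ℝ f from rfl,
      LinearIsometryEquiv.comp_fderiv]
    rfl
  rw [hdual, hdual, toDual_symm_apply, toDual_symm_apply]
  exact hf.isSymmSndFDerivAt (by norm_num) a b

theorem gradient_eq_neg_smul_of_gradient_add_mul_eq_zero {f g : F → ℝ} {g' w : F} {t : ℝ}
    (hf : DifferentiableAt ℝ f w) (hg : HasGradientAt g g' w)
    (h : gradient (fun y => f y + t * g y) w = 0) :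
    gradient f w = -(t • g') := by
  have hsum : HasGradientAt (fun y => f y + t * g y) (gradient f w + t • g') w := by
    have hf' := hf.hasGradientAt
    rw [hasGradientAt_iff_hasFDerivAt] at hf' hg ⊢
    rw [map_add, map_smul]
    exact hf'.add (hg.const_mul t)
  rw [hsum.gradient] at h
  exact eq_neg_of_add_eq_zero_left h

theorem fderiv_gradient_apply_eq_neg_of_gradient_add_mul_eq_zero {f g : F → ℝ} {G : F → F}
    {γ : ℝ → F} {z : F} (hf : ContDiff ℝ 2 f) (hg : ∀ w, HasGradientAt g (G w) w)
    (hγ : HasDerivAt γ z 0) (hGγ : DifferentiableAt ℝ (fun t => G (γ t)) 0)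
    (hcrit : ∀ t, gradient (fun w => f w + t * g w) (γ t) = 0) :
    fderiv ℝ (gradient f) (γ 0) z = -G (γ 0) := by
  have hgrad : ∀ t, gradient f (γ t) = -(t • G (γ t)) := fun t =>
    gradient_eq_neg_smul_of_gradient_add_mul_eq_zero (hf.differentiable two_ne_zero _) (hg _)
      (hcrit t)
  have hchain : HasDerivAt (fun t => gradient f (γ t)) (fderiv ℝ (gradient f) (γ 0) z) 0 :=
    (hf.differentiable_gradient _).hasFDerivAt.comp_hasDerivAt 0 hγ
  have hexplicit : HasDerivAt (fun t => gradient f (γ t)) (-G (γ 0)) 0 := by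
    simp_rw [hgrad]
    exact ((hasDerivAt_id' 0).smul hGγ.hasDerivAt).fun_neg.congr_deriv (by simp)
  exact hchain.unique hexplicit

end Gradient

theorem EuclideanSpace.hasGradientAt_half_sq_sub_apply {ι : Type*} [Fintype ι] [DecidableEq ι]
    (i j : ι) (w : EuclideanSpace ℝ ι) :
    HasGradientAt (fun y : EuclideanSpace ℝ ι => 1 / 2 * (y i - y j) ^ 2)
      ((w i - w j) • (EuclideanSpace.single i 1 - EuclideanSpace.single j 1)) w := by
  rw [hasGradientAt_iff_hasFDerivAt]
  have hsub : HasFDerivAt (fun y : EuclideanSpace ℝ ι => y i - y j)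
      (EuclideanSpace.proj i - EuclideanSpace.proj j) w :=
    (EuclideanSpace.proj (𝕜 := ℝ) i).hasFDerivAt.sub (EuclideanSpace.proj (𝕜 := ℝ) j).hasFDerivAt
  refine ((hsub.pow 2).const_mul (1 / 2)).congr_fderiv ?_
  ext y
  simp only [one_div, Nat.add_one_sub_one, pow_one, nsmul_eq_mul, Nat.cast_ofNat,
    smul_apply, sub_apply, PiLp.proj_apply, smul_eq_mul,
    map_smul, map_sub, toDual_apply_apply, EuclideanSpace.inner_single_left, Real.ringHom_apply,
    one_mul]
  ring

/-- Learning via chemical signaling, flow-network form: with energy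
`E θ w = E_nl w + (1/2)·Σ_{(j,k)∈S} θ_{jk}(w_j − w_k)² + Σ_j x_j w_j`, equilibrium map `v`
with `∇_w E(θ, ·)|_{v θ} = 0`, and chemical concentration `u` satisfying
`Hess_w E(θ₀, ·)|_{v θ₀} u = −β • ∇C(v θ₀)`, the loss `L θ = C (v θ)` satisfies, for every
edge `(j,k) ∈ S`, `(u_j − u_k)·(v(θ₀)_j − v(θ₀)_k) = β · ∂L/∂θ_{jk}`. -/
theorem stmt16 {N : ℕ}
    (S : Finset (Fin N × Fin N)) (x : Fin N → ℝ)
    (Enl : EuclideanSpace ℝ (Fin N) → ℝ) (hEnl : ContDiff ℝ 2 Enl)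
    (E : (↥S → ℝ) → EuclideanSpace ℝ (Fin N) → ℝ)
    (hEdef : ∀ (θ : ↥S → ℝ) (w : EuclideanSpace ℝ (Fin N)),
      E θ w = Enl w +
        (1 / 2) * ∑ p : ↥S, θ p * (w (p : Fin N × Fin N).1 - w (p : Fin N × Fin N).2) ^ 2 +
        ∑ j, x j * w j)
    (C : EuclideanSpace ℝ (Fin N) → ℝ) (hC : Differentiable ℝ C)
    (v : (↥S → ℝ) → EuclideanSpace ℝ (Fin N)) (hv : Differentiable ℝ v)
    (heq : ∀ θ : ↥S → ℝ, gradient (E θ) (v θ) = 0)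
    (θ₀ : ↥S → ℝ) (β : ℝ) (u : EuclideanSpace ℝ (Fin N))
    (hu : fderiv ℝ (fun w => gradient (E θ₀) w) (v θ₀) u = -β • gradient C (v θ₀))
    (L : (↥S → ℝ) → ℝ) (hL : ∀ θ, L θ = C (v θ)) :
    ∀ (j k : Fin N) (hjk : (j, k) ∈ S),
      (u j - u k) * (v θ₀ j - v θ₀ k) =
        β * fderiv ℝ L θ₀ (Pi.single (⟨(j, k), hjk⟩ : ↥S) 1) := by
  intro j k hjk
  set δ : ↥S → ℝ := Pi.single ⟨(j, k), hjk⟩ 1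
  set H := fderiv ℝ (gradient (E θ₀)) (v θ₀)
  have hE : ContDiff ℝ 2 (E θ₀) := by
    rw [show E θ₀ = _ from funext (hEdef θ₀)]
    fun_prop
  have hperturb : ∀ t, E (θ₀ + t • δ) = fun w => E θ₀ w + t * (1 / 2 * (w j - w k) ^ 2) := by
    intro t
    funext w
    simp only [hEdef, δ, Pi.add_apply, Pi.smul_apply, Pi.single_apply, smul_eq_mul, mul_ite,
      mul_one, mul_zero, add_mul, ite_mul, zero_mul, Finset.sum_add_distrib, Finset.univ_eq_attach,
      Finset.sum_ite_eq', Finset.mem_attach, ↓reduceIte]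
    ring
  have hvδ : HasDerivAt (fun t : ℝ => v (θ₀ + t • δ)) (fderiv ℝ v θ₀ δ) 0 :=
    (hv θ₀).hasFDerivAt.hasLineDerivAt δ
  have hHess : H (fderiv ℝ v θ₀ δ) =
      -((v θ₀ j - v θ₀ k) • (EuclideanSpace.single j 1 - EuclideanSpace.single k 1)) := by
    have hΔv : DifferentiableAt ℝ (fun t : ℝ => (v (θ₀ + t • δ) j - v (θ₀ + t • δ) k) •
        (EuclideanSpace.single j 1 - EuclideanSpace.single k 1 : EuclideanSpace ℝ (Fin N))) 0 := by
      have := hvδ.differentiableAt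
      fun_prop
    simpa using fderiv_gradient_apply_eq_neg_of_gradient_add_mul_eq_zero hE
      (EuclideanSpace.hasGradientAt_half_sq_sub_apply j k) hvδ hΔv
      (fun t => hperturb t ▸ heq (θ₀ + t • δ))
  have hLδ : fderiv ℝ L θ₀ δ = ⟪gradient C (v θ₀), fderiv ℝ v θ₀ δ⟫_ℝ := by
    rw [show L = C ∘ v from funext hL, fderiv_comp θ₀ (hC _) (hv θ₀)]
    exact (toDual_symm_apply).symm
  calc (u j - u k) * (v θ₀ j - v θ₀ k) = -⟪H (fderiv ℝ v θ₀ δ), u⟫_ℝ := by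
        rw [hHess, inner_neg_left, real_inner_smul_left]
        simp only [inner_sub_left, EuclideanSpace.inner_single_left, Real.ringHom_apply, one_mul]
        ring
    _ = -⟪H u, fderiv ℝ v θ₀ δ⟫_ℝ := by rw [inner_fderiv_gradient_comm hE.contDiffAt]
    _ = β * fderiv ℝ L θ₀ δ := by rw [hu, hLδ, real_inner_smul_left]; ring
end

section
/- (Critical points of the co-content are exactly Kirchhoff equilibria.) Let N ≥ 1, let î : Fin N → Fin N → ℝ → ℝ be a family of continuous current–voltage characteristics satisfying the antisymmetry î k j s = −(î j k (−s)) for all j, k, s, and let x : Fin N → ℝ be input currents. Define E : (Fin N → ℝ) → ℝ by E v = (1/2)·Σ_{j,k} (∫₀^{v j − v k} î j k s ds) + Σ_j x j · v j. Then E is differentiable, its partial derivative with respect to v j equals Σ_k î j k (v j − v k) + x j for every node j, and consequently v is a critical point of E (i.e. fderiv ℝ E v = 0) if and only if Kirchhoff's current law Σ_k î j k (v j − v k) + x j = 0 holds at every node j. -/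
open MeasureTheory

/-!
By the fundamental theorem of calculus, the term `∫₀^{v j - v k} î j k` contributes
`î j k (v j - v k) (u j - u k)` in direction `u`. Antisymmetry of `î` makes the coefficients
`î j k (v j - v k)` antisymmetric in `(j, k)`, so the `u k` half of the double sum equals the
`u j` half and cancels the factor `1/2`: the derivative is
`u ↦ Σ_j (Σ_k î j k (v j - v k) + x j) u j`.
-/

section

variable {ι : Type*} [Fintype ι]

lemma sum_sum_mul_sub_of_antisymm {a : ι → ι → ℝ} (ha : ∀ j k, a k j = -a j k) (u : ι → ℝ) :
    ∑ j, ∑ k, a j k * (u j - u k) = 2 * ∑ j, (∑ k, a j k) * u j := by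
  have hswap : ∑ j, ∑ k, a j k * u k = -∑ j, (∑ k, a j k) * u j := by
    rw [Finset.sum_comm, ← Finset.sum_neg_distrib]
    refine Finset.sum_congr rfl fun k _ => ?_
    simp only [ha k, neg_mul, Finset.sum_neg_distrib, Finset.sum_mul]
  simp only [mul_sub, Finset.sum_sub_distrib, hswap, Finset.sum_mul]
  ring

lemma ContinuousLinearMap.eq_zero_iff_apply_single_one [DecidableEq ι]
    (φ : (ι → ℝ) →L[ℝ] ℝ) : φ = 0 ↔ ∀ j, φ (Pi.single j 1) = 0 := by
  refine ⟨fun h j => by simp [h], fun h => ?_⟩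
  refine ContinuousLinearMap.coe_injective (LinearMap.pi_ext fun j t => ?_)
  have hsingle : Pi.single j t = t • (Pi.single j 1 : ι → ℝ) := by
    rw [← Pi.single_smul, smul_eq_mul, mul_one]
  simp [hsingle, h j]

lemma hasFDerivAt_integral_sub {f : ℝ → ℝ} (hf : Continuous f) (j k : ι) (v : ι → ℝ) :
    HasFDerivAt (fun w : ι → ℝ => ∫ s in (0 : ℝ)..(w j - w k), f s)
      (f (v j - v k) • ((ContinuousLinearMap.proj j : (ι → ℝ) →L[ℝ] ℝ) -
        ContinuousLinearMap.proj k)) v := by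
  have hdiff : HasFDerivAt (fun w : ι → ℝ => w j - w k)
      ((ContinuousLinearMap.proj j : (ι → ℝ) →L[ℝ] ℝ) - ContinuousLinearMap.proj k) v :=
    ((ContinuousLinearMap.proj j : (ι → ℝ) →L[ℝ] ℝ) - ContinuousLinearMap.proj k).hasFDerivAt
  exact (hf.integral_hasStrictDerivAt 0 (v j - v k)).hasDerivAt.comp_hasFDerivAt v hdiff

noncomputable def coContent (ihat : ι → ι → ℝ → ℝ) (x : ι → ℝ) (v : ι → ℝ) : ℝ :=
  (1 / 2) * ∑ j, ∑ k, (∫ s in (0 : ℝ)..(v j - v k), ihat j k s) + ∑ j, x j * v j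

/-- Net current leaving node `j`; Kirchhoff's current law says it vanishes. -/
def netCurrent (ihat : ι → ι → ℝ → ℝ) (x : ι → ℝ) (v : ι → ℝ) (j : ι) : ℝ :=
  ∑ k, ihat j k (v j - v k) + x j

variable {ihat : ι → ι → ℝ → ℝ} {x : ι → ℝ}

lemma hasFDerivAt_coContent (hcont : ∀ j k, Continuous (ihat j k))
    (hanti : ∀ j k s, ihat k j s = -(ihat j k (-s))) (v : ι → ℝ) :
    HasFDerivAt (coContent ihat x)
      (∑ j, netCurrent ihat x v j • (ContinuousLinearMap.proj j : (ι → ℝ) →L[ℝ] ℝ)) v := by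
  have hint := HasFDerivAt.fun_sum fun j (_ : j ∈ Finset.univ) =>
    HasFDerivAt.fun_sum fun k (_ : k ∈ Finset.univ) => hasFDerivAt_integral_sub (hcont j k) j k v
  have hlin := HasFDerivAt.fun_sum fun j (_ : j ∈ Finset.univ) =>
    ((ContinuousLinearMap.proj j : (ι → ℝ) →L[ℝ] ℝ).hasFDerivAt (x := v)).const_mul (x j)
  refine ((hint.const_mul (1 / 2 : ℝ)).add hlin).congr_fderiv (ContinuousLinearMap.ext fun u => ?_)
  have hcoeff : ∀ j k, ihat k j (v k - v j) = -ihat j k (v j - v k) := fun j k => by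
    rw [hanti, neg_sub]
  simp only [add_apply, smul_apply, sum_apply, sub_apply, ContinuousLinearMap.proj_apply,
    smul_eq_mul, sum_sum_mul_sub_of_antisymm hcoeff, netCurrent, add_mul, Finset.sum_add_distrib]
  ring

lemma sum_smul_proj_apply_single [DecidableEq ι] (c : ι → ℝ) (j : ι) :
    (∑ i, c i • ContinuousLinearMap.proj i : (ι → ℝ) →L[ℝ] ℝ) (Pi.single j 1) = c j := by
  simp [Pi.single_apply]

end

theorem stmt18_general {N : ℕ}
    (ihat : Fin N → Fin N → ℝ → ℝ)
    (hcont : ∀ j k, Continuous (ihat j k))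
    (hanti : ∀ (j k : Fin N) (s : ℝ), ihat k j s = -(ihat j k (-s)))
    (x : Fin N → ℝ)
    (E : (Fin N → ℝ) → ℝ)
    (hE : ∀ v : Fin N → ℝ,
      E v = (1 / 2) * ∑ j, ∑ k, (∫ s in (0 : ℝ)..(v j - v k), ihat j k s) +
        ∑ j, x j * v j) :
    Differentiable ℝ E ∧
      (∀ (v : Fin N → ℝ) (j : Fin N),
        fderiv ℝ E v (Pi.single j 1) = ∑ k, ihat j k (v j - v k) + x j) ∧
      (∀ v : Fin N → ℝ,
        fderiv ℝ E v = 0 ↔ ∀ j, ∑ k, ihat j k (v j - v k) + x j = 0) := by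
  obtain rfl : E = coContent ihat x := funext hE
  have hderiv v := hasFDerivAt_coContent (x := x) hcont hanti v
  have hpartial v j : fderiv ℝ (coContent ihat x) v (Pi.single j 1) = netCurrent ihat x v j := by
    rw [(hderiv v).fderiv, sum_smul_proj_apply_single]
  refine ⟨fun v => (hderiv v).differentiableAt, hpartial, fun v => ?_⟩
  simp only [ContinuousLinearMap.eq_zero_iff_apply_single_one, hpartial, netCurrent]

/-- Critical points of the co-content are exactly Kirchhoff equilibria:
with continuous antisymmetric current–voltage characteristics `î` and co-content
`E v = (1/2)·Σ_{j,k} ∫₀^{v_j−v_k} î_{jk}(s) ds + Σ_j x_j v_j`, the function `E` is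
differentiable, its partial derivative at `v` in direction `v_j` is
`Σ_k î_{jk}(v_j − v_k) + x_j`, and `fderiv ℝ E v = 0` iff Kirchhoff's current law
`Σ_k î_{jk}(v_j − v_k) + x_j = 0` holds at every node `j`. -/
theorem stmt18 {N : ℕ} (hN : 1 ≤ N)
    (ihat : Fin N → Fin N → ℝ → ℝ)
    (hcont : ∀ j k, Continuous (ihat j k))
    (hanti : ∀ (j k : Fin N) (s : ℝ), ihat k j s = -(ihat j k (-s)))
    (x : Fin N → ℝ)
    (E : (Fin N → ℝ) → ℝ)
    (hE : ∀ v : Fin N → ℝ,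
      E v = (1 / 2) * ∑ j, ∑ k, (∫ s in (0 : ℝ)..(v j - v k), ihat j k s) +
        ∑ j, x j * v j) :
    Differentiable ℝ E ∧
      (∀ (v : Fin N → ℝ) (j : Fin N),
        fderiv ℝ E v (Pi.single j 1) = ∑ k, ihat j k (v j - v k) + x j) ∧
      (∀ v : Fin N → ℝ,
        fderiv ℝ E v = 0 ↔ ∀ j, ∑ k, ihat j k (v j - v k) + x j = 0) :=
  stmt18_general ihat hcont hanti x E hE
end

section
/- (Equilibrium as minimizer of the co-content.) Let N ≥ 1, let î : Fin N → Fin N → ℝ → ℝ be a family of continuous current–voltage characteristics satisfying the antisymmetry î k j s = −(î j k (−s)) for all j, k, s, and assume in addition that each î j k is monotone nondecreasing. Let x : Fin N → ℝ and define E v = (1/2)·Σ_{j,k} (∫₀^{v j − v k} î j k s ds) + Σ_j x j · v j. Then E is convex on Fin N → ℝ, and v minimizes E (i.e. E v ≤ E w for all w) if and only if Kirchhoff's current law Σ_k î j k (v j − v k) + x j = 0 holds at every node j. -/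
open MeasureTheory

lemma int_lb (f : ℝ → ℝ) (hc : Continuous f) (hm : Monotone f) (a b : ℝ) :
    f a * (b - a) ≤ ∫ s in a..b, f s := by
  rcases le_total a b with hab | hab
  · calc f a * (b - a) = ∫ _s in a..b, f a := by
          rw [intervalIntegral.integral_const, smul_eq_mul]; ring
      _ ≤ ∫ s in a..b, f s :=
          intervalIntegral.integral_mono_on hab intervalIntegrable_const
            (hc.intervalIntegrable _ _) (fun s hs => hm hs.1)
  · have h1 : (∫ s in b..a, f s) ≤ f a * (a - b) := by
      calc (∫ s in b..a, f s) ≤ ∫ _s in b..a, f a :=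
            intervalIntegral.integral_mono_on hab (hc.intervalIntegrable _ _)
              intervalIntegrable_const (fun s hs => hm hs.2)
        _ = f a * (a - b) := by rw [intervalIntegral.integral_const, smul_eq_mul]; ring
    have h2 : (∫ s in a..b, f s) = -∫ s in b..a, f s := intervalIntegral.integral_symm b a
    linarith

/-- Equilibrium as minimizer of the co-content: with continuous,
antisymmetric and monotone nondecreasing current–voltage characteristics `î` and
co-content `E v = (1/2)·Σ_{j,k} ∫₀^{v_j−v_k} î_{jk}(s) ds + Σ_j x_j v_j`, the function
`E` is convex, and `v` minimizes `E` iff Kirchhoff's current law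
`Σ_k î_{jk}(v_j − v_k) + x_j = 0` holds at every node `j`. -/
theorem stmt19 {N : ℕ} (hN : 1 ≤ N)
    (ihat : Fin N → Fin N → ℝ → ℝ)
    (hcont : ∀ j k, Continuous (ihat j k))
    (hanti : ∀ (j k : Fin N) (s : ℝ), ihat k j s = -(ihat j k (-s)))
    (hmono : ∀ j k, Monotone (ihat j k))
    (x : Fin N → ℝ)
    (E : (Fin N → ℝ) → ℝ)
    (hE : ∀ v : Fin N → ℝ,
      E v = (1 / 2) * ∑ j, ∑ k, (∫ s in (0 : ℝ)..(v j - v k), ihat j k s) +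
        ∑ j, x j * v j) :
    ConvexOn ℝ Set.univ E ∧
      (∀ v : Fin N → ℝ,
        (∀ w : Fin N → ℝ, E v ≤ E w) ↔ ∀ j, ∑ k, ihat j k (v j - v k) + x j = 0) := by
  -- the master gradient inequality
  have master : ∀ v w : Fin N → ℝ,
      E v + ∑ j, (∑ k, ihat j k (v j - v k) + x j) * (w j - v j) ≤ E w := by
    intro v w
    have key : ∀ j k : Fin N,
        (∫ s in (0:ℝ)..(v j - v k), ihat j k s)
          + ihat j k (v j - v k) * ((w j - v j) - (w k - v k))
          ≤ ∫ s in (0:ℝ)..(w j - w k), ihat j k s := by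
      intro j k
      have hsplit : (∫ s in (0:ℝ)..(v j - v k), ihat j k s)
          + (∫ s in (v j - v k)..(w j - w k), ihat j k s)
          = ∫ s in (0:ℝ)..(w j - w k), ihat j k s :=
        intervalIntegral.integral_add_adjacent_intervals
          ((hcont j k).intervalIntegrable _ _) ((hcont j k).intervalIntegrable _ _)
      have hlb := int_lb _ (hcont j k) (hmono j k) (v j - v k) (w j - w k)
      have harg : (w j - w k) - (v j - v k) = (w j - v j) - (w k - v k) := by ring
      rw [harg] at hlb
      linarith
    have hsum : (∑ j, ∑ k, ((∫ s in (0:ℝ)..(v j - v k), ihat j k s)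
          + ihat j k (v j - v k) * ((w j - v j) - (w k - v k))))
        ≤ ∑ j, ∑ k, ∫ s in (0:ℝ)..(w j - w k), ihat j k s :=
      Finset.sum_le_sum fun j _ => Finset.sum_le_sum fun k _ => key j k
    -- antisymmetry identity
    have ha : ∀ j k : Fin N, ihat k j (v k - v j) = -(ihat j k (v j - v k)) := by
      intro j k
      rw [hanti j k (v k - v j), neg_sub]
    have anti_id : ∑ j, ∑ k, ihat j k (v j - v k) * ((w j - v j) - (w k - v k))
        = 2 * ∑ j, (∑ k, ihat j k (v j - v k)) * (w j - v j) := by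
      have e1 : ∑ j, ∑ k, ihat j k (v j - v k) * ((w j - v j) - (w k - v k))
          = (∑ j, ∑ k, ihat j k (v j - v k) * (w j - v j))
            - ∑ j, ∑ k, ihat j k (v j - v k) * (w k - v k) := by
        rw [← Finset.sum_sub_distrib]
        refine Finset.sum_congr rfl fun j _ => ?_
        rw [← Finset.sum_sub_distrib]
        exact Finset.sum_congr rfl fun k _ => by ring
      have e2 : ∑ j, ∑ k, ihat j k (v j - v k) * (w k - v k)
          = - ∑ j, ∑ k, ihat j k (v j - v k) * (w j - v j) := by
        rw [Finset.sum_comm]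
        rw [← Finset.sum_neg_distrib]
        refine Finset.sum_congr rfl fun k _ => ?_
        rw [← Finset.sum_neg_distrib]
        refine Finset.sum_congr rfl fun j _ => ?_
        rw [ha k j]
        ring
      rw [e1, e2]
      rw [Finset.mul_sum]
      rw [sub_neg_eq_add]
      rw [← Finset.sum_add_distrib]
      refine Finset.sum_congr rfl fun j _ => ?_
      rw [Finset.sum_mul]
      ring
    have expand : ∑ j, (∑ k, ihat j k (v j - v k) + x j) * (w j - v j)
        = (∑ j, (∑ k, ihat j k (v j - v k)) * (w j - v j)) + ∑ j, x j * (w j - v j) := by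
      rw [← Finset.sum_add_distrib]
      exact Finset.sum_congr rfl fun j _ => by ring
    have hsum' : (∑ j, ∑ k, (∫ s in (0:ℝ)..(v j - v k), ihat j k s))
          + ∑ j, ∑ k, ihat j k (v j - v k) * ((w j - v j) - (w k - v k))
        ≤ ∑ j, ∑ k, ∫ s in (0:ℝ)..(w j - w k), ihat j k s := by
      calc (∑ j, ∑ k, (∫ s in (0:ℝ)..(v j - v k), ihat j k s))
            + ∑ j, ∑ k, ihat j k (v j - v k) * ((w j - v j) - (w k - v k))
          = ∑ j, ∑ k, ((∫ s in (0:ℝ)..(v j - v k), ihat j k s)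
              + ihat j k (v j - v k) * ((w j - v j) - (w k - v k))) := by
            rw [← Finset.sum_add_distrib]
            refine Finset.sum_congr rfl fun j _ => ?_
            rw [← Finset.sum_add_distrib]
        _ ≤ _ := hsum
    have hlinear : ∑ j, x j * w j = (∑ j, x j * v j) + ∑ j, x j * (w j - v j) := by
      rw [← Finset.sum_add_distrib]
      exact Finset.sum_congr rfl fun j _ => by ring
    rw [hE v, hE w, expand, hlinear]
    rw [anti_id] at hsum'
    linarith
  constructor
  · refine ⟨convex_univ, ?_⟩
    intro p _ q _ a b ha hb hab
    set m := a • p + b • q with hmdef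
    have hmj : ∀ j, m j = a * p j + b * q j := fun j => by
      simp [hmdef, mul_comm]
    have h1 := master m p
    have h2 := master m q
    have hzero : a * (∑ j, (∑ k, ihat j k (m j - m k) + x j) * (p j - m j))
        + b * (∑ j, (∑ k, ihat j k (m j - m k) + x j) * (q j - m j)) = 0 := by
      rw [Finset.mul_sum, Finset.mul_sum, ← Finset.sum_add_distrib]
      refine Finset.sum_eq_zero fun j _ => ?_
      linear_combination (-(∑ k, ihat j k (m j - m k) + x j)) * hmj j +
        (-(∑ k, ihat j k (m j - m k) + x j) * m j) * hab
    have h1' := mul_le_mul_of_nonneg_left h1 ha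
    have h2' := mul_le_mul_of_nonneg_left h2 hb
    rw [mul_add] at h1' h2'
    have hEm : a * E m + b * E m = E m := by rw [← add_mul, hab, one_mul]
    have : E m ≤ a * E p + b * E q := by linarith
    simpa [smul_eq_mul] using this
  · intro v
    constructor
    · -- minimizer → KCL
      intro hmin j
      set h : ℝ → ℝ := fun t => ∑ k, ihat j k (if k = j then 0 else v j + t - v k) + x j
        with hhdef
      have hconth : Continuous h := by
        simp only [hhdef]
        refine Continuous.add (continuous_finset_sum _ fun k _ => ?_) continuous_const
        have hc2 : Continuous fun t : ℝ => (if k = j then 0 else v j + t - v k) := by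
          by_cases hkj : k = j
          · simp only [if_pos hkj]
            exact continuous_const
          · simp only [if_neg hkj]
            exact (continuous_const.add continuous_id).sub continuous_const
        exact (hcont j k).comp hc2
      have key2 : ∀ t : ℝ, 0 ≤ t * h t := by
        intro t
        have hm2 := master (Function.update v j (v j + t)) v
        have hupd : ∀ k, Function.update v j (v j + t) j - Function.update v j (v j + t) k
            = (if k = j then 0 else v j + t - v k) := by
          intro k
          by_cases hkj : k = j
          · subst hkj; simp
          · rw [Function.update_of_ne hkj, Function.update_self, if_neg hkj]
        have hsum0 : ∑ i, (∑ k, ihat i k (Function.update v j (v j + t) i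
              - Function.update v j (v j + t) k) + x i)
              * (v i - Function.update v j (v j + t) i) = -(t * h t) := by
          rw [Finset.sum_eq_single j]
          · have hterm : ∑ k, ihat j k (Function.update v j (v j + t) j
                - Function.update v j (v j + t) k) + x j = h t := by
              simp only [hhdef]
              congr 1
              exact Finset.sum_congr rfl fun k _ => by rw [hupd k]
            rw [hterm, Function.update_self]
            ring
          · intro i _ hij
            rw [Function.update_of_ne hij]
            ring
          · intro habs
            exact absurd (Finset.mem_univ j) habs
        rw [hsum0] at hm2
        have := hmin (Function.update v j (v j + t))
        linarith
      have hpos : 0 ≤ h 0 := by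
        have htend : Filter.Tendsto h (nhdsWithin 0 (Set.Ioi 0)) (nhds (h 0)) :=
          (hconth.continuousAt).tendsto.mono_left nhdsWithin_le_nhds
        refine ge_of_tendsto htend ?_
        filter_upwards [self_mem_nhdsWithin] with t ht
        have := key2 t
        have ht' : 0 < t := ht
        nlinarith
      have hneg : h 0 ≤ 0 := by
        have htend : Filter.Tendsto h (nhdsWithin 0 (Set.Iio 0)) (nhds (h 0)) :=
          (hconth.continuousAt).tendsto.mono_left nhdsWithin_le_nhds
        refine le_of_tendsto htend ?_
        filter_upwards [self_mem_nhdsWithin] with t ht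
        have := key2 t
        have ht' : t < 0 := ht
        nlinarith
      have h0 : h 0 = 0 := le_antisymm hneg hpos
      have : ∑ k, ihat j k (v j - v k) + x j = h 0 := by
        rw [hhdef]
        congr 1
        refine Finset.sum_congr rfl fun k _ => ?_
        by_cases hkj : k = j
        · subst hkj; simp
        · rw [if_neg hkj]; congr 1; ring
      rw [this, h0]
    · -- KCL → minimizer
      intro hk w
      have hm2 := master v w
      have h0 : ∑ j, (∑ k, ihat j k (v j - v k) + x j) * (w j - v j) = 0 :=
        Finset.sum_eq_zero fun j _ => by rw [hk j, zero_mul]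
      linarith
end
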